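/- arXiv:2308.05656 — 4 statements merged into one kernel-verified Lean document; each statement's English description precedes it below -/
import Mathlib

section
/- Let K = ℚ(s,t) and let v₀ be a valuation dominating A = ℚ[s,t]_{(s,t)} with value group contained in ℚ, satisfying v₀(s) = 1, v₀(t) = 3/2, residue field Kv₀ = ℚ, and such that the residue class of t²/s³ equals 1. Then there is no element φ in the valuation ring O_{v₀} with v₀(φ) = 1/2 and φ² ∼_{v₀} −s; equivalently, the polynomial f(x) = x² + s does not factor modulo v₀-equivalence as a product (x + φ₁)(x + φ₂) with φ₁, φ₂ ∈ O_{v₀}. -/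
/-!
If `v φ = 1/2` then `u = φ s / t` is a unit, and `φ² ∼ −s` together with `t² ∼ s³` gives
`u² ∼ −1`. Reducing modulo the maximal ideal, the residue `c ∈ ℚ` of `u` would satisfy
`c² = −1`.
-/

/-- `K = ℚ(s,t)`, the rational function field in two variables over `ℚ`. -/
abbrev ExampleField : Type := FractionRing (MvPolynomial (Fin 2) ℚ)

/-- The variable `s` of `ℚ(s,t)`. -/
noncomputable def sElt : ExampleField :=
  algebraMap (MvPolynomial (Fin 2) ℚ) ExampleField (MvPolynomial.X 0)

/-- The variable `t` of `ℚ(s,t)`. -/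
noncomputable def tElt : ExampleField :=
  algebraMap (MvPolynomial (Fin 2) ℚ) ExampleField (MvPolynomial.X 1)

namespace AddValuation

variable {K Γ₀ : Type*} [Field K] [LinearOrderedAddCommGroupWithTop Γ₀] (v : AddValuation K Γ₀)

theorem pos_map_div_of_lt {a b : K} (h : v b < v a) : 0 < v (a / b) := by
  rw [map_div, LinearOrderedAddCommGroupWithTop.sub_pos]
  exact Or.inl h

theorem pos_map_sq_sub_sq {a b : K} (ha : 0 ≤ v a) (hb : 0 ≤ v b) (h : 0 < v (a - b)) :
    0 < v (a ^ 2 - b ^ 2) := by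
  rw [sq_sub_sq, mul_comm, map_mul]
  exact add_pos_of_pos_of_nonneg h ((le_min ha hb).trans (v.map_add a b))

/-- `−1` is not a square in a residue field equal to `ℚ`. -/
theorem not_pos_map_sq_add_one [CharZero K] (hrat : ∀ c : ℚ, c ≠ 0 → v (c : K) = 0)
    (hres : ∀ u : K, v u = 0 → ∃ c : ℚ, 0 < v (u - (c : K))) {u : K} (hu : v u = 0) :
    ¬ 0 < v (u ^ 2 + 1) := by
  intro hsq
  obtain ⟨c, hc⟩ := hres u hu
  have hvc : v (c : K) = 0 := by
    rw [← hu]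
    exact v.map_eq_of_lt_sub (by rwa [hu, map_sub_swap])
  have hsub : 0 < v (u ^ 2 - (c : K) ^ 2) := v.pos_map_sq_sub_sq hu.ge hvc.ge hc
  have hpos : 0 < v ((c ^ 2 + 1 : ℚ) : K) := by
    rw [show ((c ^ 2 + 1 : ℚ) : K) = (u ^ 2 + 1) - (u ^ 2 - (c : K) ^ 2) by push_cast; ring]
    exact (lt_min hsq hsub).trans_le (v.map_sub _ _)
  exact hpos.ne' (hrat _ (by positivity))

end AddValuation

/-- Let `K = ℚ(s,t)` and let `v₀` be a valuation (dominating
`ℚ[s,t]_{(s,t)}`, in particular trivial on `ℚ`) with value group contained in `ℚ`,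
`v₀ s = 1`, `v₀ t = 3/2`, residue field `Kv₀ = ℚ` (every unit is congruent to a rational
constant modulo the maximal ideal) and residue class `[t²/s³] = 1`.  Then there is no `φ` in
the valuation ring of `v₀` with `v₀ φ = 1/2` and `φ² ∼_{v₀} (−s)`; i.e. `x² + s` does not
factor modulo `v₀`-equivalence as `(x + φ₁)(x + φ₂)` with `φᵢ ∈ O_{v₀}`.  Here
`φ² ∼_{v₀} (−s)` means `v₀(φ² + s) > min(v₀ φ², v₀ s) = 1`. -/
theorem stmt_4 (v : AddValuation ExampleField (WithTop ℚ))
    (hs : v sElt = ((1 : ℚ) : WithTop ℚ))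
    (ht : v tElt = ((3/2 : ℚ) : WithTop ℚ))
    (hrat : ∀ c : ℚ, c ≠ 0 → v (c : ExampleField) = 0)
    (hres : ∀ u : ExampleField, v u = 0 → ∃ c : ℚ, 0 < v (u - (c : ExampleField)))
    (hresval : 0 < v (tElt ^ 2 / sElt ^ 3 - 1)) :
    ¬ ∃ φ : ExampleField, v φ = ((1/2 : ℚ) : WithTop ℚ) ∧
      ((1 : ℚ) : WithTop ℚ) < v (φ ^ 2 + sElt) := by
  rintro ⟨φ, hφ, hfac⟩
  have hs0 : sElt ≠ 0 := fun h => by simp [h] at hs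
  have ht0 : tElt ≠ 0 := fun h => by simp [h] at ht
  set u := φ * sElt / tElt
  have hu : v u = 0 := by
    rw [v.map_div, v.map_mul, hφ, hs, ht]
    norm_cast
    norm_num
  have hu2 : 0 < v (u ^ 2 + 1) := by
    have hsplit : u ^ 2 + 1 = (φ ^ 2 + sElt) / sElt - u ^ 2 * (tElt ^ 2 / sElt ^ 3 - 1) := by
      simp only [u]
      field_simp
      ring
    rw [hsplit]
    refine (lt_min ?_ ?_).trans_le (v.map_sub _ _)
    · exact v.pos_map_div_of_lt (hs ▸ hfac)
    · rwa [v.map_mul, v.map_pow, hu, nsmul_zero, zero_add]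
  exact v.not_pos_map_sq_add_one hrat hres hu hu2
end

section
/- Let v_{k-1} be an inductive valuation of K[x] with key polynomial φ_{k-1}, and let φ be a key polynomial over v_{k-1}. Then deg φ_{k-1} divides deg φ. -/
open Polynomial

variable {K : Type*} [Field K] {Γ : Type*} [AddCommGroup Γ] [LinearOrder Γ] [IsOrderedAddMonoid Γ]

/-- `g ∼_w h` : equivalence in the (pseudo-)valuation `w` (MacLane). -/
def EquivV {R : Type*} [CommRing R] (w : AddValuation R (WithTop Γ)) (g h : R) : Prop :=
  min (w g) (w h) < w (g - h) ∨ (w g = ⊤ ∧ w h = ⊤)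

/-- `φ` equivalence-divides `g` in `w`. -/
def EqDvd {R : Type*} [CommRing R] (w : AddValuation R (WithTop Γ)) (φ g : R) : Prop :=
  ∃ a : R, EquivV w g (a * φ)

/-- `φ` is equivalence irreducible in `w`. -/
def EqIrred {R : Type*} [CommRing R] (w : AddValuation R (WithTop Γ)) (φ : R) : Prop :=
  ∀ a b : R, EqDvd w φ (a * b) → EqDvd w φ a ∨ EqDvd w φ b

/-- `φ` is minimal in `w`. -/
def MinimalV (w : AddValuation (Polynomial K) (WithTop Γ)) (φ : Polynomial K) : Prop :=
  ∀ g : Polynomial K, g ≠ 0 → EqDvd w φ g → φ.degree ≤ g.degree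

/-- `φ` is a key polynomial over `w`. -/
def KeyOver (w : AddValuation (Polynomial K) (WithTop Γ)) (φ : Polynomial K) : Prop :=
  φ.Monic ∧ 0 < φ.degree ∧ EqIrred w φ ∧ MinimalV w φ

/-- `w = [u; w φ = μ]` is the augmented (inductive) valuation of MacLane: on the `φ`-adic
expansion `g = Σ cᵢ φ^i` (with `deg cᵢ < deg φ`) one has `w g = min ᵢ (u cᵢ + i μ)`. -/
def IsAugmentation (u w : AddValuation (Polynomial K) (WithTop Γ)) (φ : Polynomial K)
    (μ : WithTop Γ) : Prop :=
  w φ = μ ∧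
  ∀ (g : Polynomial K) (n : ℕ) (c : ℕ → Polynomial K),
    (∀ i, (c i).degree < φ.degree) → g = ∑ i ∈ Finset.range n, c i * φ ^ i →
    w g = (Finset.range n).inf fun i => u (c i) + i • μ

/-- The coefficients of the `φ`-adic expansion: `phiCoeff φ i g` is the coefficient of `φ^i`. -/
noncomputable def phiCoeff (φ : Polynomial K) : ℕ → Polynomial K → Polynomial K
  | 0, g => g %ₘ φ
  | (i+1), g => phiCoeff φ i (g /ₘ φ)

/-- The self-computation (inductiveness) property: `w` computes values of `φ`-adic
expansions as the min of the values of the terms. -/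
def ExpansionInf (w : AddValuation (Polynomial K) (WithTop Γ)) (φ : Polynomial K) : Prop :=
  ∀ (g : Polynomial K) (n : ℕ) (c : ℕ → Polynomial K),
    (∀ i, (c i).degree < φ.degree) → g = ∑ i ∈ Finset.range n, c i * φ ^ i →
    w g = (Finset.range n).inf fun i => w (c i * φ ^ i)

/-- Effective degree `D_φ(g)` with respect to `w`. -/
noncomputable def effDeg (w : AddValuation (Polynomial K) (WithTop Γ)) (φ g : Polynomial K) : ℕ :=
  sSup {i : ℕ | w g = w (phiCoeff φ i g * φ ^ i)}

/-!
Write `φ = ∑_{i ≤ n} cᵢ φprev ^ i` in `φprev`-adic form with `n = deg φ / deg φprev`, so that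
`cₙ ≠ 0`. Since `φprev` is irreducible, `cₙ` has an inverse `b` modulo `φprev`, and the
augmentation formula gives `w (a * b) = u ((a * b) %ₘ φprev)` with the quotient contributing
strictly more. Hence reducing the coefficients of `b * φ` modulo `φprev` only changes it by
terms of larger `w`-value: `b * φ` is `w`-equivalent to `∑ ((b * cᵢ) %ₘ φprev) φprev ^ i`,
whose top coefficient is `1`, so its degree is `n * deg φprev`. Minimality of `φ` gives
`deg φ ≤ n * deg φprev`. If `w φ = ⊤`, then `μ = ⊤` and `φprev ^ n` plays the same role.
-/

section Equivalence

variable {R : Type*} [CommRing R] {w : AddValuation R (WithTop Γ)} {g h : R}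

theorem equivV_refl (w : AddValuation R (WithTop Γ)) (g : R) : EquivV w g g := by
  by_cases hg : w g = ⊤
  · exact Or.inr ⟨hg, hg⟩
  · left
    rw [sub_self, w.map_zero, min_self]
    exact lt_top_iff_ne_top.2 hg

theorem equivV_of_lt_sub (hlt : w h < w (h - g)) : EquivV w g h :=
  Or.inl ((min_le_right _ _).trans_lt (by rwa [w.map_sub_swap]))

theorem EquivV.ne_zero (H : EquivV w g h) (hh : w h ≠ ⊤) : g ≠ 0 := by
  rintro rfl
  rcases H with H | ⟨-, H⟩
  · rw [w.map_zero, zero_sub, w.map_neg, min_eq_right le_top] at H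
    exact lt_irrefl _ H
  · exact hh H

end Equivalence

theorem MinimalV.ne_top_of_degree_lt {u : AddValuation K[X] (WithTop Γ)} {t g : K[X]}
    (ht : MinimalV u t) (hg0 : g ≠ 0) (hg : g.degree < t.degree) : u g ≠ ⊤ := fun htop =>
  (ht g hg0 ⟨0, Or.inr ⟨htop, by rw [zero_mul, u.map_zero]⟩⟩).not_gt hg

theorem KeyOver.irreducible {u : AddValuation K[X] (WithTop Γ)} {t : K[X]} (ht : KeyOver u t) :
    Irreducible t := by
  obtain ⟨hmon, hdeg, hirr, hmin⟩ := ht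
  refine ⟨fun hu => (degree_eq_zero_of_isUnit hu ▸ hdeg).false, fun f g hfg => ?_⟩
  have hf0 : f ≠ 0 := by rintro rfl; exact hmon.ne_zero (by simpa using hfg)
  have hg0 : g ≠ 0 := by rintro rfl; exact hmon.ne_zero (by simpa using hfg)
  have hdeg_add : t.natDegree = f.natDegree + g.natDegree := by rw [hfg, natDegree_mul hf0 hg0]
  have hunit {p : K[X]} (hp0 : p ≠ 0) (hp : p.natDegree = 0) : IsUnit p :=
    isUnit_iff_degree_eq_zero.2 (by rw [degree_eq_natDegree hp0, hp, Nat.cast_zero])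
  rcases hirr f g ⟨1, by rw [one_mul, ← hfg]; exact equivV_refl u t⟩ with hf | hg
  · have := natDegree_le_natDegree (hmin f hf0 hf)
    exact Or.inr (hunit hg0 (by omega))
  · have := natDegree_le_natDegree (hmin g hg0 hg)
    exact Or.inl (hunit hf0 (by omega))

theorem degree_sum_mul_pow_lt {R : Type*} [Semiring R] [Nontrivial R] {t : R[X]} (ht : t.Monic)
    {c : ℕ → R[X]} (hc : ∀ i, (c i).degree < t.degree) (n : ℕ) :
    (∑ i ∈ Finset.range n, c i * t ^ i).degree < ↑(n * t.natDegree) := by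
  induction n with
  | zero => simp
  | succ n ih =>
    rw [Finset.sum_range_succ]
    refine (degree_add_le _ _).trans_lt (max_lt (ih.trans_le ?_) ?_)
    · exact_mod_cast Nat.mul_le_mul_right _ n.le_succ
    · rw [(ht.pow n).degree_mul, degree_eq_natDegree (ht.pow n).ne_zero, ht.natDegree_pow]
      calc (c n).degree + ↑(n * t.natDegree) < t.degree + ↑(n * t.natDegree) :=
            WithBot.add_lt_add_right (WithBot.coe_ne_bot) (hc n)
        _ = ↑((n + 1) * t.natDegree) := by
            rw [degree_eq_natDegree ht.ne_zero]; push_cast; ring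

theorem degree_divByMonic_mul_lt {R : Type*} [CommRing R] [IsDomain R] {t a b : R[X]}
    (ht : t.Monic) (ha : a.degree < t.degree) (hb : b.degree < t.degree) :
    ((a * b) /ₘ t).degree < t.degree := by
  rcases eq_or_ne a 0 with rfl | ha0
  · simpa using bot_le.trans_lt ha
  rcases eq_or_ne b 0 with rfl | hb0
  · simpa using bot_le.trans_lt ha
  refine degree_lt_degree ?_
  rw [natDegree_divByMonic _ ht, natDegree_mul ha0 hb0]
  have := natDegree_lt_natDegree ha0 ha
  have := natDegree_lt_natDegree hb0 hb
  omega

theorem degree_phiCoeff_lt {t : K[X]} (ht : t.Monic) :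
    ∀ (i : ℕ) (g : K[X]), (phiCoeff t i g).degree < t.degree
  | 0, g => degree_modByMonic_lt g ht
  | i + 1, g => degree_phiCoeff_lt ht i (g /ₘ t)

theorem exists_eq_sum_phiCoeff_add (t : K[X]) :
    ∀ (N : ℕ) (g : K[X]), ∃ r, g = ∑ i ∈ Finset.range N, phiCoeff t i g * t ^ i + r * t ^ N
  | 0, g => ⟨g, by simp⟩
  | N + 1, g => by
    obtain ⟨r, hr⟩ := exists_eq_sum_phiCoeff_add t N (g /ₘ t)
    refine ⟨r, ?_⟩
    conv_lhs => rw [← modByMonic_add_div g t, hr]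
    rw [Finset.sum_range_succ', mul_add, Finset.mul_sum]
    simp only [phiCoeff, pow_succ, pow_zero, mul_one, mul_left_comm t, mul_comm _ t]
    ring

theorem eq_sum_phiCoeff {t g : K[X]} (ht : t.Monic) {N : ℕ} (hg : g.natDegree < N * t.natDegree) :
    g = ∑ i ∈ Finset.range N, phiCoeff t i g * t ^ i := by
  obtain ⟨r, hr⟩ := exists_eq_sum_phiCoeff_add t N g
  suffices r = 0 by simpa [this] using hr
  by_contra hr0
  have hlow := degree_sum_mul_pow_lt ht (fun i => degree_phiCoeff_lt ht i g) N
  have htop : (↑(N * t.natDegree) : WithBot ℕ) ≤ (r * t ^ N).degree := by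
    rw [(ht.pow N).degree_mul, degree_eq_natDegree (ht.pow N).ne_zero, ht.natDegree_pow]
    exact le_add_of_nonneg_left (zero_le_degree_iff.2 hr0)
  have hdeg : g.degree = (r * t ^ N).degree := by
    rw [hr, degree_add_eq_right_of_degree_lt (hlow.trans_le htop)]
  have : g.degree < ↑(N * t.natDegree) := degree_le_natDegree.trans_lt (by exact_mod_cast hg)
  exact (htop.trans_lt (hdeg ▸ this)).false

theorem exists_degree_lt_mul_modByMonic_eq_one {t c : K[X]} (ht : t.Monic) (hirr : Irreducible t)
    (hc : ¬ t ∣ c) : ∃ b, b.degree < t.degree ∧ (b * c) %ₘ t = 1 := by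
  obtain ⟨U, V, hUV⟩ := hirr.coprime_iff_not_dvd.2 hc
  refine ⟨V %ₘ t, degree_modByMonic_lt V ht, ?_⟩
  have hdvd : t ∣ V %ₘ t * c - 1 := by
    have : V %ₘ t * c - 1 = (V %ₘ t - V) * c - U * t := by rw [← hUV]; ring
    rw [this]
    exact ((dvd_modByMonic_sub V t).mul_right c).sub (dvd_mul_left t U)
  rw [modByMonic_eq_of_dvd_sub ht hdvd, (modByMonic_eq_self_iff ht).2]
  rw [degree_one]
  exact degree_pos_of_irreducible hirr

namespace IsAugmentation

variable {u w : AddValuation K[X] (WithTop Γ)} {t : K[X]} {μ : WithTop Γ}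

theorem apply_of_degree_lt (haug : IsAugmentation u w t μ) {g : K[X]} (hg : g.degree < t.degree) :
    w g = u g := by
  simpa using haug.2 g 1 (fun _ => g) (fun _ => hg) (by simp)

theorem apply_ne_top_of_degree_lt (haug : IsAugmentation u w t μ) (hmin : MinimalV u t) {g : K[X]}
    (hg0 : g ≠ 0) (hg : g.degree < t.degree) : w g ≠ ⊤ :=
  haug.apply_of_degree_lt hg ▸ hmin.ne_top_of_degree_lt hg0 hg

theorem apply_add_mul (haug : IsAugmentation u w t μ) {f e : K[X]} (hf : f.degree < t.degree)
    (he : e.degree < t.degree) : w (f + t * e) = min (u f) (u e + μ) := by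
  have := haug.2 (f + t * e) 2 (fun i => if i = 0 then f else if i = 1 then e else 0)
    (fun i => by split_ifs <;> first | assumption | exact bot_le.trans_lt hf)
    (by simp [Finset.sum_range_succ, mul_comm])
  simpa [Finset.range_add_one, min_comm] using this

theorem modByMonic_lt_divByMonic_add (haug : IsAugmentation u w t μ) (hmon : t.Monic)
    (hmin : MinimalV u t) (hμ : u t < μ) {a b : K[X]} (ha : a ≠ 0) (hb : b ≠ 0)
    (hda : a.degree < t.degree) (hdb : b.degree < t.degree) :
    u ((a * b) %ₘ t) < u ((a * b) /ₘ t) + μ := by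
  set f := (a * b) %ₘ t
  set e := (a * b) /ₘ t
  have hfe : f + t * e = a * b := modByMonic_add_div _ _
  have hf : f.degree < t.degree := degree_modByMonic_lt _ hmon
  have he : e.degree < t.degree := degree_divByMonic_mul_lt hmon hda hdb
  by_contra! hle
  have he0 : e ≠ 0 := by
    rintro he0
    rw [he0, u.map_zero, top_add, top_le_iff] at hle
    have hfab : f = a * b := by simpa [he0] using hfe
    exact hmin.ne_top_of_degree_lt (hfab ▸ mul_ne_zero ha hb) hf hle
  have hue : u e ≠ ⊤ := hmin.ne_top_of_degree_lt he0 he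
  have hlt : u t + u e < u e + μ := by rw [add_comm]; exact WithTop.add_lt_add_left hue hμ
  -- `u (a * b)` is computed twice: by the dominant term `t * e`, and through `w`.
  have hdom : u (a * b) = u t + u e := by
    rw [← hfe, u.map_add_eq_of_lt_right (by rw [u.map_mul]; exact hlt.trans_le hle), u.map_mul]
  have hvia_w : u (a * b) = u e + μ := by
    rw [u.map_mul, ← haug.apply_of_degree_lt hda, ← haug.apply_of_degree_lt hdb, ← w.map_mul,
      ← hfe, haug.apply_add_mul hf he, min_eq_right hle]
  exact hlt.ne (hdom.symm.trans hvia_w)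

theorem apply_mul_eq_modByMonic (haug : IsAugmentation u w t μ) (hmon : t.Monic)
    (hmin : MinimalV u t) (hμ : u t < μ) {a b : K[X]} (ha : a ≠ 0) (hb : b ≠ 0)
    (hda : a.degree < t.degree) (hdb : b.degree < t.degree) :
    w (a * b) = u ((a * b) %ₘ t) := by
  rw [← modByMonic_add_div (a * b) t, haug.apply_add_mul (degree_modByMonic_lt _ hmon)
    (degree_divByMonic_mul_lt hmon hda hdb), modByMonic_add_div,
    min_eq_left (haug.modByMonic_lt_divByMonic_add hmon hmin hμ ha hb hda hdb).le]

theorem equivV_sum_modByMonic_mul (haug : IsAugmentation u w t μ) (hmon : t.Monic)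
    (hmin : MinimalV u t) (hμ : u t < μ) {c : ℕ → K[X]} (hc : ∀ i, (c i).degree < t.degree)
    {N : ℕ} {g : K[X]} (hg : g = ∑ i ∈ Finset.range N, c i * t ^ i) (hwg : w g ≠ ⊤) {b : K[X]}
    (hb0 : b ≠ 0) (hb : b.degree < t.degree) :
    EquivV w (∑ i ∈ Finset.range N, (b * c i) %ₘ t * t ^ i) (b * g) := by
  have hwbg : w (b * g) ≠ ⊤ := by
    rw [w.map_mul]
    exact WithTop.add_ne_top.2 ⟨haug.apply_ne_top_of_degree_lt hmin hb0 hb, hwg⟩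
  have hdiff : b * g - ∑ i ∈ Finset.range N, (b * c i) %ₘ t * t ^ i
      = ∑ i ∈ Finset.range N, (b * c i) /ₘ t * t ^ (i + 1) := by
    rw [hg, Finset.mul_sum, ← Finset.sum_sub_distrib]
    refine Finset.sum_congr rfl fun i _ => ?_
    linear_combination -t ^ i * modByMonic_add_div (b * c i) t
  refine equivV_of_lt_sub ?_
  rw [hdiff]
  refine w.map_lt_sum hwbg fun i hi => ?_
  rcases eq_or_ne (c i) 0 with hci | hci
  · simpa [hci] using lt_top_iff_ne_top.2 hwbg
  have hle : w (b * g) ≤ u ((b * c i) %ₘ t) + i • μ := by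
    rw [← haug.apply_mul_eq_modByMonic hmon hmin hμ hb0 hci hb (hc i), w.map_mul, w.map_mul,
      haug.apply_of_degree_lt (hc i), add_assoc]
    gcongr
    exact haug.2 g N c hc hg ▸ Finset.inf_le hi
  have hlt := haug.modByMonic_lt_divByMonic_add hmon hmin hμ hb0 hci hb (hc i)
  have hterm : w ((b * c i) /ₘ t * t ^ (i + 1)) = u ((b * c i) /ₘ t) + μ + i • μ := by
    rw [w.map_mul, w.map_pow, haug.1,
      haug.apply_of_degree_lt (degree_divByMonic_mul_lt hmon hb (hc i)), succ_nsmul', add_assoc]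
  rw [hterm]
  rcases eq_or_ne (i • μ) ⊤ with hiμ | hiμ
  · rw [hiμ, add_top]
    exact lt_top_iff_ne_top.2 hwbg
  · exact hle.trans_lt (WithTop.add_lt_add_right hiμ hlt)

theorem exists_eqDvd_degree_le (haug : IsAugmentation u w t μ) (hkey : KeyOver u t) (hμ : u t < μ)
    {φ : K[X]} (hφ : φ ≠ 0) :
    ∃ ψ ≠ 0, EqDvd w φ ψ ∧ ψ.degree ≤ ↑(φ.natDegree / t.natDegree * t.natDegree) := by
  have hirr := hkey.irreducible
  obtain ⟨hmon, hdeg, -, hmin⟩ := hkey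
  set n := φ.natDegree / t.natDegree
  set c := fun i => phiCoeff t i φ
  have hc : ∀ i, (c i).degree < t.degree := fun i => degree_phiCoeff_lt hmon i φ
  have hφc : φ = ∑ i ∈ Finset.range (n + 1), c i * t ^ i := by
    refine eq_sum_phiCoeff hmon ?_
    rw [mul_comm]
    exact Nat.lt_mul_div_succ _ (natDegree_pos_iff_degree_pos.2 hdeg)
  have hcn : c n ≠ 0 := by
    intro hcn
    have hlow := degree_sum_mul_pow_lt hmon hc n
    rw [Finset.sum_range_succ, hcn, zero_mul, add_zero] at hφc
    rw [← hφc, degree_eq_natDegree hφ, Nat.cast_lt] at hlow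
    exact (Nat.div_mul_le_self _ _).not_gt hlow
  by_cases hwφ : w φ = ⊤
  · have hnμ : n • μ = ⊤ := by
      have htop : u (c n) + n • μ = ⊤ := by
        rw [← top_le_iff, ← hwφ, haug.2 φ (n + 1) c hc hφc]
        exact Finset.inf_le (Finset.self_mem_range_succ n)
      exact (WithTop.add_eq_top.1 htop).resolve_left (hmin.ne_top_of_degree_lt hcn (hc n))
    refine ⟨t ^ n, pow_ne_zero _ hmon.ne_zero,
      ⟨0, Or.inr ⟨by rw [w.map_pow, haug.1, hnμ], by rw [zero_mul, w.map_zero]⟩⟩,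
      degree_le_of_natDegree_le natDegree_pow_le⟩
  obtain ⟨b, hb, hbc⟩ := exists_degree_lt_mul_modByMonic_eq_one hmon
    hirr fun hdvd => (degree_le_of_dvd hdvd hcn).not_gt (hc n)
  have hb0 : b ≠ 0 := by rintro rfl; simp at hbc
  have hequiv := haug.equivV_sum_modByMonic_mul hmon hmin hμ hc hφc hwφ hb0 hb
  refine ⟨_, hequiv.ne_zero ?_, ⟨b, hequiv⟩, ?_⟩
  · rw [w.map_mul]
    exact WithTop.add_ne_top.2 ⟨haug.apply_ne_top_of_degree_lt hmin hb0 hb, hwφ⟩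
  · rw [Finset.sum_range_succ, hbc, one_mul]
    exact (degree_add_le _ _).trans (max_le
      (degree_sum_mul_pow_lt hmon (fun i => degree_modByMonic_lt _ hmon) n).le
      (degree_le_of_natDegree_le natDegree_pow_le))

end IsAugmentation

theorem stmt_7_general {K : Type*} [Field K] {Γ : Type*} [AddCommGroup Γ] [LinearOrder Γ] [IsOrderedAddMonoid Γ]
    (u w : AddValuation (Polynomial K) (WithTop Γ)) (φprev : Polynomial K) (μ : WithTop Γ)
    (hkeyprev : KeyOver u φprev) (hμ : u φprev < μ)
    (haug : IsAugmentation u w φprev μ)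
    (φ : Polynomial K) (hkey : KeyOver w φ) :
    φprev.natDegree ∣ φ.natDegree := by
  obtain ⟨ψ, hψ0, hdvd, hψ⟩ := haug.exists_eqDvd_degree_le hkeyprev hμ hkey.1.ne_zero
  have hle : φ.natDegree ≤ φ.natDegree / φprev.natDegree * φprev.natDegree :=
    natDegree_le_of_degree_le ((hkey.2.2.2 ψ hψ0 hdvd).trans hψ)
  exact Dvd.intro_left _ ((Nat.div_mul_le_self _ _).antisymm hle)

/-- **MacLane, Theorem 9.4.**  Let `w = [u; w φprev = μ]` be an inductive
valuation of `K[x]` with (last) key polynomial `φprev`, and let `φ` be a key polynomial over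
`w`.  Then `deg φprev` divides `deg φ`.  (The inductiveness of `w` is encoded by the
augmentation relation together with the self-computation property `ExpansionInf w φprev`.) -/
theorem stmt_7 {K : Type*} [Field K] {Γ : Type*} [AddCommGroup Γ] [LinearOrder Γ] [IsOrderedAddMonoid Γ]
    (u w : AddValuation (Polynomial K) (WithTop Γ)) (φprev : Polynomial K) (μ : WithTop Γ)
    (hkeyprev : KeyOver u φprev) (hμ : u φprev < μ)
    (haug : IsAugmentation u w φprev μ) (hself : ExpansionInf w φprev)
    (φ : Polynomial K) (hkey : KeyOver w φ) :
    φprev.natDegree ∣ φ.natDegree :=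
  stmt_7_general u w φprev μ hkeyprev hμ haug φ hkey
end

section
/- Let v_k = [v_{k-1}; v_k(φ_k) = μ_k] be an inductive valuation of K[x]. For every g ∈ K[x] with deg g < deg φ_{k+1} (when φ_{k+1} is a key polynomial of the next stage), the values stabilize: v_j(g) = v_k(g) for all j > k; in particular v_j(φ_k) = v_k(φ_k) for all j ≥ k. -/
open Polynomial

variable {K : Type*} [Field K] {Γ : Type*} [AddCommGroup Γ] [LinearOrder Γ] [IsOrderedAddMonoid Γ]

/-! A value `w j g` can only change at a stage `j + 1` with `deg φ (j+1) ≤ deg g`. Hence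
`deg g < deg φ (k+1)` gives stability at once, while for `g = φ a` one follows the stages of the
same degree: there `φ a - φ (j+1)` is a remainder of smaller degree whose value stays `μ a`,
because the non-equivalence `φ (a+1) ≁ φ a` starts it off and the minimality of each new key
polynomial keeps it from growing; then
`w (j+1) (φ a) = min (w j (φ a - φ (j+1))) (μ (j+1)) = μ a`. -/

lemma Polynomial.Monic.degree_sub_lt_of_degree_eq {p q : Polynomial K} (hp : p.Monic)
    (hq : q.Monic) (hd : p.degree = q.degree) : (p - q).degree < q.degree :=
  degree_sub_lt_right hd hq.ne_zero (by rw [hp.leadingCoeff, hq.leadingCoeff])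

section Augmentation

variable {u v : AddValuation (Polynomial K) (WithTop Γ)} {φ : Polynomial K} {μ : WithTop Γ}

lemma IsAugmentation.map_eq_of_degree_lt (h : IsAugmentation u v φ μ) {g : Polynomial K}
    (hg : g.degree < φ.degree) : v g = u g := by
  simpa using h.2 g 1 (fun _ => g) (fun _ => hg) (by simp)

lemma IsAugmentation.map_add_eq (h : IsAugmentation u v φ μ) (hφ : 0 < φ.degree)
    {c : Polynomial K} (hc : c.degree < φ.degree) : v (c + φ) = min (u c) μ := by
  have hcoeff : ∀ i : ℕ, (if i = 0 then c else 1 : Polynomial K).degree < φ.degree := by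
    intro i
    split_ifs
    · exact hc
    · rwa [degree_one]
  rw [h.2 (c + φ) 2 _ hcoeff (by simp [Finset.sum_range_succ])]
  simp [Finset.range_add_one, min_comm]

lemma IsAugmentation.map_eq_of_map_sub_eq (h : IsAugmentation u v φ μ) (hφ : φ.Monic)
    (hφ0 : 0 < φ.degree) (hμ : u φ < μ) {p : Polynomial K} (hp : p.Monic)
    (hd : p.degree = φ.degree) (hpφ : u (p - φ) = u p) : v p = u p ∧ u p < μ := by
  have hlt : u p < μ :=
    calc u p = min (u p) (u (p - φ)) := by rw [hpφ, min_self]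
      _ ≤ u (p - (p - φ)) := u.map_sub _ _
      _ = u φ := by rw [sub_sub_cancel]
      _ < μ := hμ
  refine ⟨?_, hlt⟩
  rw [← sub_add_cancel p φ, h.map_add_eq hφ0 (hp.degree_sub_lt_of_degree_eq hφ hd),
    sub_add_cancel, hpφ, min_eq_left hlt.le]

end Augmentation

section Minimal

variable {v : AddValuation (Polynomial K) (WithTop Γ)} {ψ : Polynomial K}

/-- Otherwise `ψ` would equivalence-divide `h`, with quotient `1`, although `deg h < deg ψ`. -/
lemma MinimalV.map_sub_le (hψ : MinimalV v ψ) {h : Polynomial K} (hh : h.degree < ψ.degree) :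
    v (h - ψ) ≤ v h := by
  by_contra! hlt
  have hh0 : h ≠ 0 := by
    rintro rfl
    exact not_top_lt (v.map_zero ▸ hlt)
  have hdvd : EqDvd v ψ h :=
    ⟨1, Or.inl (by rw [one_mul]; exact (min_le_left _ _).trans_lt hlt)⟩
  exact (hψ h hh0 hdvd).not_gt hh

lemma MinimalV.map_le_map_sub (hψ : MinimalV v ψ) (hψm : ψ.Monic) {p : Polynomial K}
    (hp : p.Monic) (hd : p.degree = ψ.degree) : v p ≤ v (p - ψ) := by
  simpa [v.map_sub_swap ψ p] using
    hψ.map_sub_le ((hψm.degree_sub_lt_of_degree_eq hp hd.symm).trans_eq hd)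

lemma MinimalV.map_sub_eq (hψ : MinimalV v ψ) (hψm : ψ.Monic) {p φ : Polynomial K}
    (hp : p.Monic) (hd : p.degree = ψ.degree) (hpφ : (p - φ).degree < ψ.degree)
    (hvpφ : v (p - φ) = v p) (hvφ : v p < v φ) : v (p - ψ) = v p := by
  refine le_antisymm ?_ (hψ.map_le_map_sub hψm hp hd)
  by_contra! hlt
  have hsplit : v p < v (p - φ - ψ) :=
    calc v p < min (v (p - ψ)) (v φ) := lt_min hlt hvφ
      _ ≤ v (p - ψ - φ) := v.map_sub _ _
      _ = v (p - φ - ψ) := by rw [sub_right_comm]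
  exact (hψ.map_sub_le hpφ).not_gt (hvpφ ▸ hsplit)

end Minimal

section Stability

variable {w : ℕ → AddValuation (Polynomial K) (WithTop Γ)} {φ : ℕ → Polynomial K}
  {μ : ℕ → WithTop Γ}

lemma map_eq_of_degree_lt_of_le
    (hchain : ∀ i, IsAugmentation (w i) (w (i+1)) (φ (i+1)) (μ (i+1)))
    (hdeg : ∀ i, (φ (i+1)).degree ≤ (φ (i+2)).degree) {k : ℕ} {g : Polynomial K}
    (hg : g.degree < (φ (k+1)).degree) {j : ℕ} (hkj : k ≤ j) : w j g = w k g := by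
  induction j, hkj using Nat.le_induction with
  | base => rfl
  | succ j hkj ih =>
    have hmono : Monotone fun n => (φ (n+1)).degree := monotone_nat_of_le_succ hdeg
    rw [(hchain j).map_eq_of_degree_lt (hg.trans_le (hmono hkj)), ih]

lemma map_keyPolynomial_eq_and_map_sub_eq (hmonic : ∀ i, (φ (i+1)).Monic)
    (hpos : ∀ i, 0 < (φ (i+1)).degree) (hmin : ∀ i, MinimalV (w i) (φ (i+1)))
    (hμ : ∀ i, w i (φ (i+1)) < μ (i+1))
    (hchain : ∀ i, IsAugmentation (w i) (w (i+1)) (φ (i+1)) (μ (i+1)))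
    (hdeg : ∀ i, (φ (i+1)).degree ≤ (φ (i+2)).degree)
    (hne : ∀ i, ¬ EquivV (w (i+1)) (φ (i+2)) (φ (i+1))) {a j : ℕ} (haj : a + 1 ≤ j) :
    w j (φ (a+1)) = μ (a+1) ∧
      ((φ (a+1)).degree = (φ (j+1)).degree → w j (φ (a+1) - φ (j+1)) = μ (a+1)) := by
  induction j, haj using Nat.le_induction with
  | base =>
    refine ⟨(hchain a).1, fun hd => le_antisymm ?_ ?_⟩
    · calc w (a+1) (φ (a+1) - φ (a+2)) = w (a+1) (φ (a+2) - φ (a+1)) := (w _).map_sub_swap _ _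
        _ ≤ min (w (a+1) (φ (a+2))) (w (a+1) (φ (a+1))) := not_lt.mp (not_or.mp (hne a)).1
        _ ≤ μ (a+1) := min_le_of_right_le (hchain a).1.le
    · simpa [(hchain a).1] using (hmin (a+1)).map_le_map_sub (hmonic (a+1)) (hmonic a) hd
  | succ j haj ih =>
    have hmono : Monotone fun n => (φ (n+1)).degree := monotone_nat_of_le_succ hdeg
    rcases (hmono (show a ≤ j by omega)).lt_or_eq with hlt | heq
    · exact ⟨by rw [(hchain j).map_eq_of_degree_lt hlt, ih.1],
        fun hd => ((hlt.trans_le (hdeg j)).ne hd).elim⟩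
    have hsub : w j (φ (a+1) - φ (j+1)) = w j (φ (a+1)) := by rw [ih.2 heq, ih.1]
    obtain ⟨hstay, hltμ⟩ := (hchain j).map_eq_of_map_sub_eq (hmonic j) (hpos j) (hμ j)
      (hmonic a) heq hsub
    refine ⟨hstay.trans ih.1, fun hd => ?_⟩
    have hrem : (φ (a+1) - φ (j+1)).degree < (φ (j+1)).degree :=
      (hmonic a).degree_sub_lt_of_degree_eq (hmonic j) heq
    have hsub' : w (j+1) (φ (a+1) - φ (j+1)) = w (j+1) (φ (a+1)) := by
      rw [(hchain j).map_eq_of_degree_lt hrem, hstay, hsub]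
    rw [(hmin (j+1)).map_sub_eq (hmonic (j+1)) (hmonic a) hd (hrem.trans_le (hdeg j))
      hsub' (by rw [hstay, (hchain j).1]; exact hltμ), hstay, ih.1]

end Stability

/-- **MacLane's stability, 3.13 of [M1].**  Let `w 0, w 1, w 2, …` be an
augmented sequence of inductive valuations of `K[x]`, where `w (i+1) = [w i; (φ (i+1)) ↦ μ (i+1)]`
with `φ (i+1)` a key polynomial over `w i`, `μ (i+1) > w i (φ (i+1))`, nondecreasing degrees,
and `φ (i+2)` not equivalent to `φ (i+1)` in `w (i+1)`.  Then for every `g` with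
`deg g < deg φ (k+1)` the values stabilize: `w j g = w k g` for all `j ≥ k`; in particular
`w j (φ (i+1)) = w (i+1) (φ (i+1))` for all `j ≥ i+1`. -/
theorem stmt_9 {K : Type*} [Field K] {Γ : Type*} [AddCommGroup Γ] [LinearOrder Γ] [IsOrderedAddMonoid Γ]
    (w : ℕ → AddValuation (Polynomial K) (WithTop Γ))
    (φ : ℕ → Polynomial K) (μ : ℕ → WithTop Γ)
    (hkey : ∀ i, KeyOver (w i) (φ (i+1)))
    (hμ : ∀ i, w i (φ (i+1)) < μ (i+1))
    (hchain : ∀ i, IsAugmentation (w i) (w (i+1)) (φ (i+1)) (μ (i+1)))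
    (hdeg : ∀ i, (φ (i+1)).degree ≤ (φ (i+2)).degree)
    (hne : ∀ i, ¬ EquivV (w (i+1)) (φ (i+2)) (φ (i+1))) :
    (∀ (k : ℕ) (g : Polynomial K), g.degree < (φ (k+1)).degree →
        ∀ j, k ≤ j → w j g = w k g) ∧
    (∀ i j, i + 1 ≤ j → w j (φ (i+1)) = w (i+1) (φ (i+1))) := by
  refine ⟨fun k g hg j hkj => map_eq_of_degree_lt_of_le hchain hdeg hg hkj, fun a j haj => ?_⟩
  have hvalue := map_keyPolynomial_eq_and_map_sub_eq (fun i => (hkey i).1) (fun i => (hkey i).2.1)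
    (fun i => (hkey i).2.2.2) hμ hchain hdeg hne haj
  rw [hvalue.1, (hchain a).1]
end

section
/- Let v_k be an inductive valuation of K[x] with key polynomial φ_k, let g be a key polynomial over v_k which is homogeneous in v_k, with φ_k-adic expansion g = Σ_{i=0}^r a_i φ_k^i (a_r = 1, deg a_i < deg φ_k), and let e ≥ 1. Define c_i = Σ (e choose l₀,...,l_r) a₀^{l₀} a₁^{l₁} ⋯ a_r^{l_r}, where the sum is over (l₀,...,l_r) ∈ ℕ^{r+1} with Σ l_j = e and Σ j·l_j = i. Then g^e = Σ_{i=0}^{re} c_i φ_k^i, and v_k(g^e) = min_i {v_{k-1}(c_i) + i·v_k(φ_k)} = min_i {v_k(c_i) + i·v_k(φ_k)}. -/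
open Polynomial

variable {K : Type*} [Field K] {Γ : Type*} [AddCommGroup Γ] [LinearOrder Γ] [IsOrderedAddMonoid Γ]

/-! Multinomial expansion gives `g ^ e = ∑ cᵢ φ ^ i`. Since `a r = 1`, homogeneity gives
`w g = r • w φ` and `r • w φ ≤ v (a j) + j • w φ` for `v = w`, hence also for `v = u`, as the two
agree in degree `< deg φ`. A monomial of `cᵢ` with exponents `l` (`∑ lⱼ = e`, `∑ j lⱼ = i`) then
has `v`-value plus `i • w φ` at least `∑ lⱼ • (v (a j) + j • w φ) ≥ (r * e) • w φ = w (g ^ e)`,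
with equality at `i = r * e`, where `c (r * e) = a r ^ e = 1`. -/

open Finset

section PowExpansion

variable {R : Type*} [CommSemiring R]

def powExpansionCoeff (a : ℕ → R) (r e i : ℕ) : R :=
  ∑ l ∈ (Finset.Nat.antidiagonalTuple (r + 1) e).filter
      (fun l => ∑ j : Fin (r + 1), (j : ℕ) * l j = i),
    (Nat.multinomial Finset.univ l : R) * ∏ j : Fin (r + 1), a (j : ℕ) ^ l j

lemma sum_val_mul_le_of_mem_antidiagonalTuple {r e : ℕ} {l : Fin (r + 1) → ℕ}
    (hl : l ∈ Finset.Nat.antidiagonalTuple (r + 1) e) :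
    ∑ j : Fin (r + 1), (j : ℕ) * l j ≤ r * e := by
  rw [Finset.Nat.mem_antidiagonalTuple] at hl
  calc ∑ j : Fin (r + 1), (j : ℕ) * l j ≤ ∑ j : Fin (r + 1), r * l j :=
        sum_le_sum fun j _ => Nat.mul_le_mul_right _ (Nat.lt_succ_iff.mp j.isLt)
    _ = r * e := by rw [← mul_sum, hl]

lemma filter_antidiagonalTuple_sum_val_mul_eq_mul (r e : ℕ) :
    (Finset.Nat.antidiagonalTuple (r + 1) e).filter
        (fun l => ∑ j : Fin (r + 1), (j : ℕ) * l j = r * e) = {Pi.single (Fin.last r) e} := by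
  ext l
  simp only [mem_filter, Finset.Nat.mem_antidiagonalTuple, mem_singleton]
  constructor
  · rintro ⟨hsum, hweight⟩
    have hle : ∀ j ∈ (univ : Finset (Fin (r + 1))), (j : ℕ) * l j ≤ r * l j :=
      fun j _ => Nat.mul_le_mul_right _ (Nat.lt_succ_iff.mp j.isLt)
    have heq := (sum_eq_sum_iff_of_le hle).mp (by rw [hweight, ← mul_sum, hsum])
    have hzero : ∀ j ≠ Fin.last r, l j = 0 := fun j hj => by
      have hjr : (j : ℕ) < r := Fin.val_lt_last hj
      by_contra hlj
      exact (Nat.mul_lt_mul_of_pos_right hjr (Nat.pos_of_ne_zero hlj)).ne (heq j (mem_univ j))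
    ext j
    by_cases hj : j = Fin.last r
    · subst hj
      rw [Pi.single_eq_same, ← hsum, sum_eq_single_of_mem _ (mem_univ _) fun j _ => hzero j]
    · rw [Pi.single_eq_of_ne hj, hzero j hj]
  · rintro rfl
    simp [Pi.single_apply]

theorem sum_mul_pow_pow_eq_sum_powExpansionCoeff (a : ℕ → R) (x : R) (r e : ℕ) :
    (∑ j ∈ range (r + 1), a j * x ^ j) ^ e =
      ∑ i ∈ range (r * e + 1), powExpansionCoeff a r e i * x ^ i := by
  have hmaps : ∀ l ∈ Finset.Nat.antidiagonalTuple (r + 1) e,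
      ∑ j : Fin (r + 1), (j : ℕ) * l j ∈ range (r * e + 1) := fun l hl =>
    mem_range_succ_iff.mpr (sum_val_mul_le_of_mem_antidiagonalTuple hl)
  rw [← Fin.sum_univ_eq_sum_range (fun j => a j * x ^ j), sum_pow_eq_sum_piAntidiag,
    piAntidiag_univ_fin_eq_antidiagonalTuple, ← sum_fiberwise_of_maps_to hmaps]
  refine sum_congr rfl fun i _ => ?_
  rw [powExpansionCoeff, sum_mul]
  refine sum_congr rfl fun l hl => ?_
  rw [← (mem_filter.mp hl).2, mul_assoc, ← prod_pow_eq_pow_sum, ← prod_mul_distrib]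
  exact congrArg _ (prod_congr rfl fun j _ => by rw [mul_pow, ← pow_mul, mul_comm (j : ℕ)])

theorem powExpansionCoeff_mul_self (a : ℕ → R) (r e : ℕ) :
    powExpansionCoeff a r e (r * e) = a r ^ e := by
  rw [powExpansionCoeff, filter_antidiagonalTuple_sum_val_mul_eq_mul, sum_singleton,
    Nat.multinomial_single, Nat.cast_one, one_mul,
    prod_eq_single (Fin.last r) (fun j _ hj => by rw [Pi.single_eq_of_ne hj, pow_zero])
      (by simp), Pi.single_eq_same, Fin.val_last]

end PowExpansion

namespace AddValuation

variable {R Γ₀ : Type*} [CommRing R] [LinearOrderedAddCommMonoidWithTop Γ₀] (v : AddValuation R Γ₀)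

theorem map_prod {ι : Type*} (s : Finset ι) (f : ι → R) :
    v (∏ i ∈ s, f i) = ∑ i ∈ s, v (f i) := by
  induction s using Finset.cons_induction with
  | empty => simp [v.map_one]
  | cons i s hi ih => rw [prod_cons, sum_cons, v.map_mul, ih]

theorem map_natCast_nonneg (n : ℕ) : 0 ≤ v (n : R) := by
  induction n with
  | zero => simp [v.map_zero]
  | succ n ih =>
    rw [Nat.cast_succ]
    exact v.map_le_add ih v.map_one.ge

theorem le_map_sum_add {ι : Type*} {s : Finset ι} {f : ι → R} {b c : Γ₀}
    (hf : ∀ i ∈ s, b ≤ v (f i) + c) : b ≤ v (∑ i ∈ s, f i) + c := by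
  induction s using Finset.cons_induction with
  | empty => simp [v.map_zero]
  | cons i s hi ih =>
    rw [sum_cons]
    refine le_trans ?_ (add_le_add_left (v.map_add _ _) c)
    rw [← min_add_add_right]
    exact le_min (hf i (mem_cons_self i s)) (ih fun j hj => hf j (mem_cons_of_mem hj))

variable {v} {a : ℕ → R} {r : ℕ} {μ : Γ₀}

theorem nsmul_le_map_powExpansionCoeff_add (ha : ∀ j ≤ r, r • μ ≤ v (a j) + j • μ) (e i : ℕ) :
    (r * e) • μ ≤ v (powExpansionCoeff a r e i) + i • μ := by
  refine v.le_map_sum_add fun l hl => ?_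
  obtain ⟨hsum, hweight⟩ := mem_filter.mp hl
  rw [Finset.Nat.mem_antidiagonalTuple] at hsum
  have hterms : v (∏ j : Fin (r + 1), a j ^ l j) + i • μ =
      ∑ j : Fin (r + 1), l j • (v (a j) + (j : ℕ) • μ) := by
    simp only [v.map_prod, v.map_pow, ← hweight, sum_smul, ← sum_add_distrib, smul_add, smul_smul,
      mul_comm (l _)]
  calc (r * e) • μ = ∑ j : Fin (r + 1), l j • r • μ := by
        rw [← sum_smul, hsum, smul_smul, mul_comm]
    _ ≤ ∑ j : Fin (r + 1), l j • (v (a j) + (j : ℕ) • μ) :=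
        sum_le_sum fun j _ => nsmul_le_nsmul_right (ha j (Nat.lt_succ_iff.mp j.isLt)) _
    _ ≤ v (Nat.multinomial univ l : R) + ∑ j : Fin (r + 1), l j • (v (a j) + (j : ℕ) • μ) :=
        le_add_of_nonneg_left (v.map_natCast_nonneg _)
    _ = v ((Nat.multinomial univ l : R) * ∏ j : Fin (r + 1), a j ^ l j) + i • μ := by
        rw [v.map_mul, add_assoc, hterms]

theorem inf_map_powExpansionCoeff_add_nsmul (ha : ∀ j ≤ r, r • μ ≤ v (a j) + j • μ)
    (har : v (a r) = 0) (e : ℕ) :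
    (range (r * e + 1)).inf (fun i => v (powExpansionCoeff a r e i) + i • μ) = (r * e) • μ := by
  refine le_antisymm ?_ (Finset.le_inf fun i _ => nsmul_le_map_powExpansionCoeff_add ha e i)
  calc (range (r * e + 1)).inf (fun i => v (powExpansionCoeff a r e i) + i • μ)
      ≤ v (powExpansionCoeff a r e (r * e)) + (r * e) • μ := inf_le (self_mem_range_succ _)
    _ = (r * e) • μ := by rw [powExpansionCoeff_mul_self, v.map_pow, har, nsmul_zero, zero_add]

end AddValuation

theorem IsAugmentation.map_eq_of_degree_lt_s15 {u w : AddValuation K[X] (WithTop Γ)} {φ : K[X]}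
    {μ : WithTop Γ} (h : IsAugmentation u w φ μ) {f : K[X]} (hf : f.degree < φ.degree) :
    w f = u f := by
  simpa using h.2 f 1 (fun _ => f) (fun _ => hf) (by simp)

theorem stmt_15_general {K : Type*} [Field K] {Γ : Type*} [AddCommGroup Γ] [LinearOrder Γ] [IsOrderedAddMonoid Γ]
    (u w : AddValuation (Polynomial K) (WithTop Γ)) (φ : Polynomial K) (μ : WithTop Γ)
    (haug : IsAugmentation u w φ μ)
    (r e : ℕ)
    (a : ℕ → Polynomial K) (har : a r = 1) (hdeg : ∀ i, (a i).degree < φ.degree)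
    (g : Polynomial K) (hg : g = ∑ i ∈ Finset.range (r + 1), a i * φ ^ i)
    (hhom : ∀ i ∈ Finset.range (r + 1), a i ≠ 0 → w (a i * φ ^ i) = w g)
    (c : ℕ → Polynomial K)
    (hc : ∀ i, c i =
      ∑ l ∈ (Finset.Nat.antidiagonalTuple (r + 1) e).filter
          (fun l => ∑ j : Fin (r + 1), (j : ℕ) * l j = i),
        (Nat.multinomial Finset.univ l : Polynomial K) * ∏ j : Fin (r + 1), a (j : ℕ) ^ l j) :
    g ^ e = ∑ i ∈ Finset.range (r * e + 1), c i * φ ^ i ∧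
    w (g ^ e) = (Finset.range (r * e + 1)).inf (fun i => u (c i) + i • w φ) ∧
    w (g ^ e) = (Finset.range (r * e + 1)).inf (fun i => w (c i) + i • w φ) := by
  obtain rfl : c = powExpansionCoeff a r e := funext hc
  have hwg : w g = r • w φ := by
    simpa [har, w.map_pow] using (hhom r (self_mem_range_succ r) (by simp [har])).symm
  have hw : ∀ j ≤ r, r • w φ ≤ w (a j) + j • w φ := by
    intro j hj
    rcases eq_or_ne (a j) 0 with h0 | h0
    · simp [h0, w.map_zero]
    · rw [← hwg, ← w.map_pow, ← w.map_mul, hhom j (mem_range_succ_iff.mpr hj) h0]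
  have hu : ∀ j ≤ r, r • w φ ≤ u (a j) + j • w φ := fun j hj =>
    haug.map_eq_of_degree_lt_s15 (hdeg j) ▸ hw j hj
  have hwge : w (g ^ e) = (r * e) • w φ := by rw [w.map_pow, hwg, smul_smul, mul_comm]
  refine ⟨hg ▸ sum_mul_pow_pow_eq_sum_powExpansionCoeff a φ r e, ?_, ?_⟩
  · rw [hwge, AddValuation.inf_map_powExpansionCoeff_add_nsmul hu (by rw [har, u.map_one])]
  · rw [hwge, AddValuation.inf_map_powExpansionCoeff_add_nsmul hw (by rw [har, w.map_one])]

/-- Let `w = [u; w φ = μ]` be an inductive valuation of `K[x]` with key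
polynomial `φ`, let `g` be a key polynomial over `w` which is homogeneous in `w`, with
`φ`-adic expansion `g = Σ_{i≤r} aᵢ φ^i` (`a_r = 1`, `deg aᵢ < deg φ`), and let `e ≥ 1`.
With `cᵢ = Σ (e choose l₀,…,l_r) a₀^{l₀} ⋯ a_r^{l_r}` (sum over tuples with `Σ lⱼ = e` and
`Σ j·lⱼ = i`), one has `g^e = Σ_{i≤re} cᵢ φ^i` and
`w (g^e) = minᵢ (u cᵢ + i·(w φ)) = minᵢ (w cᵢ + i·(w φ))`. -/
theorem stmt_15 {K : Type*} [Field K] {Γ : Type*} [AddCommGroup Γ] [LinearOrder Γ] [IsOrderedAddMonoid Γ]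
    (u w : AddValuation (Polynomial K) (WithTop Γ)) (φ : Polynomial K) (μ : WithTop Γ)
    (hkeyφ : KeyOver u φ) (hμ : u φ < μ) (haug : IsAugmentation u w φ μ)
    (r e : ℕ) (he : 1 ≤ e)
    (a : ℕ → Polynomial K) (har : a r = 1) (hdeg : ∀ i, (a i).degree < φ.degree)
    (g : Polynomial K) (hg : g = ∑ i ∈ Finset.range (r + 1), a i * φ ^ i)
    (hkeyg : KeyOver w g)
    (hhom : ∀ i ∈ Finset.range (r + 1), a i ≠ 0 → w (a i * φ ^ i) = w g)
    (c : ℕ → Polynomial K)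
    (hc : ∀ i, c i =
      ∑ l ∈ (Finset.Nat.antidiagonalTuple (r + 1) e).filter
          (fun l => ∑ j : Fin (r + 1), (j : ℕ) * l j = i),
        (Nat.multinomial Finset.univ l : Polynomial K) * ∏ j : Fin (r + 1), a (j : ℕ) ^ l j) :
    g ^ e = ∑ i ∈ Finset.range (r * e + 1), c i * φ ^ i ∧
    w (g ^ e) = (Finset.range (r * e + 1)).inf (fun i => u (c i) + i • w φ) ∧
    w (g ^ e) = (Finset.range (r * e + 1)).inf (fun i => w (c i) + i • w φ) :=
  stmt_15_general u w φ μ haug r e a har hdeg g hg hhom c hc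
end
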